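/- Let Q be a positive integer and let w₁, …, w_Q be complex numbers. For each Λ > 0, the estimate ∏_{j=1}^{Q} |z − w_j| ≥ Λ^Q holds for all z outside a finite union of discs having sum of radii at most 6Λ. -/

import Mathlib

/-!
Put `r = 3Λ/Q`. Greedily cover the points by discs: take the largest `p` such that some closed
disc of radius `p r` contains at least `p` of the points, remove those points, and recurse. The
concentric discs of radius `2 p r` have radii summing to at most `2 r Q = 6Λ`, and outside them
every disc `B(z, m r)` contains fewer than `m` of the points. Hence the `i`-th closest point to
`z` lies at distance at least `i r`, so `∏ |z - wⱼ| ≥ Q! r^Q ≥ Λ^Q`, using `Q^Q ≤ 3^Q Q!`.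
-/

open Finset Metric
open scoped Nat

lemma pow_le_factorial_mul_div_pow {Λ : ℝ} (hΛ : 0 ≤ Λ) (n : ℕ) :
    Λ ^ n ≤ n ! * (3 * Λ / n) ^ n := by
  rcases Nat.eq_zero_or_pos n with rfl | hn
  · simp
  have hpow_self : (n : ℝ) ^ n ≤ 3 ^ n * n ! := by
    have hexp : Real.exp n ≤ 3 ^ n := by
      rw [← Real.exp_one_pow]
      exact pow_le_pow_left₀ (Real.exp_pos 1).le (by linarith [Real.exp_one_lt_d9]) n
    have := (Real.pow_div_factorial_le_exp n (Nat.cast_nonneg n) n).trans hexp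
    rwa [div_le_iff₀ (by positivity)] at this
  rw [div_pow, mul_pow, mul_div_assoc', le_div_iff₀ (by positivity)]
  calc Λ ^ n * n ^ n ≤ Λ ^ n * (3 ^ n * n !) := by gcongr
    _ = n ! * (3 ^ n * Λ ^ n) := by ring

lemma factorial_mul_pow_le_prod {n : ℕ} {d : Fin n → ℝ} {r : ℝ} (hr : 0 ≤ r)
    (hd : ∀ m : ℕ, 0 < m → #{j | d j < m * r} < m) :
    n ! * r ^ n ≤ ∏ j, d j := by
  set σ := Tuple.sort d
  have hsorted : ∀ i : Fin n, ((i : ℕ) + 1) * r ≤ d (σ i) := by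
    intro i
    by_contra! hlt
    have hsub : (Iic i).map σ.toEmbedding ⊆ ({j | d j < ((i : ℕ) + 1 : ℕ) * r} : Finset _) := by
      intro j hj
      obtain ⟨a, ha, rfl⟩ := mem_map.mp hj
      rw [mem_filter]
      push_cast
      exact ⟨mem_univ _, (Tuple.monotone_sort d (mem_Iic.mp ha)).trans_lt hlt⟩
    have := (card_le_card hsub).trans_lt (hd _ i.val.succ_pos)
    rw [card_map, Fin.card_Iic] at this
    exact this.false
  have hfactorial : ∏ i : Fin n, (((i : ℕ) + 1) * r) = n ! * r ^ n := by
    rw [prod_mul_distrib, prod_const, card_univ, Fintype.card_fin,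
      Fin.prod_univ_eq_prod_range (fun i => ((i : ℝ) + 1)) n, ← prod_range_add_one_eq_factorial]
    push_cast
    rfl
  rw [← hfactorial, ← Equiv.prod_comp σ d]
  exact prod_le_prod (fun i _ => by positivity) (fun i _ => hsorted i)

section Greedy

variable {X ι : Type*} [PseudoMetricSpace X] (w : ι → X) {r : ℝ}

lemma exists_maximal_cluster (hr : 0 ≤ r) {s : Finset ι} (hs : s.Nonempty) :
    ∃ (p : ℕ) (c : X), 0 < p ∧ p ≤ #{j ∈ s | dist (w j) c ≤ p * r} ∧
      ∀ m : ℕ, p < m → ∀ c' : X, #{j ∈ s | dist (w j) c' ≤ m * r} < m := by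
  classical
  let P : ℕ → Prop := fun p => ∃ c : X, p ≤ #{j ∈ s | dist (w j) c ≤ p * r}
  obtain ⟨j₀, hj₀⟩ := hs
  have hP₁ : P 1 := ⟨w j₀, card_pos.mpr ⟨j₀, by simp [hj₀, hr]⟩⟩
  have hs₁ : 1 ≤ #s := card_pos.mpr ⟨j₀, hj₀⟩
  obtain ⟨c, hc⟩ := Nat.findGreatest_spec hs₁ hP₁
  have hpos : 0 < Nat.findGreatest P #s := Nat.le_findGreatest hs₁ hP₁
  refine ⟨_, c, hpos, hc, fun m hm c' => ?_⟩
  by_cases hms : m ≤ #s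
  · by_contra! hle
    exact Nat.findGreatest_is_greatest hm hms ⟨c', hle⟩
  · exact (card_filter_le _ _).trans_lt (not_le.mp hms)

variable [DecidableEq ι]

theorem exists_balls_card_dist_lt (hr : 0 ≤ r) (s : Finset ι) :
    ∃ (k : ℕ) (c : Fin k → X) (p : Fin k → ℕ), ∑ i, p i ≤ #s ∧
      ∀ z ∉ ⋃ i, ball (c i) (2 * p i * r),
        ∀ m : ℕ, 0 < m → #{j ∈ s | dist z (w j) < m * r} < m := by
  induction s using Finset.strongInduction with
  | H s ih =>
  rcases s.eq_empty_or_nonempty with rfl | hs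
  · exact ⟨0, Fin.elim0, Fin.elim0, by simp, fun z _ m hm => by simpa using hm⟩
  obtain ⟨p, c₀, hp, hpt, hmax⟩ := exists_maximal_cluster w hr hs
  set t := {j ∈ s | dist (w j) c₀ ≤ p * r}
  have hts : t ⊆ s := filter_subset _ _
  obtain ⟨k, c, q, hsum, hcount⟩ :=
    ih (s \ t) (sdiff_ssubset hts (card_pos.mp (hp.trans_le hpt)))
  refine ⟨k + 1, Fin.cons c₀ c, Fin.cons p q, ?_, fun z hz m hm => ?_⟩
  · rw [Fin.sum_cons, ← card_sdiff_add_card_eq_card hts, add_comm]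
    exact add_le_add hsum hpt
  simp only [Set.mem_iUnion, Fin.exists_fin_succ, Fin.cons_zero, Fin.cons_succ, not_or,
    not_exists] at hz
  obtain ⟨hz₀, hz⟩ := hz
  rcases le_or_gt m p with hmp | hpm
  · -- points of `t` are within `p r` of `c₀`, which is at distance `≥ 2 p r` from `z`
    refine (card_le_card fun j hj => ?_).trans_lt (hcount z (by simpa using hz) m hm)
    rw [mem_filter] at hj ⊢
    refine ⟨mem_sdiff.mpr ⟨hj.1, fun hjt => hz₀ ?_⟩, hj.2⟩
    have hmp' : (m : ℝ) * r ≤ p * r := by gcongr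
    rw [mem_ball]
    calc dist z c₀ ≤ dist z (w j) + dist (w j) c₀ := dist_triangle _ _ _
      _ < m * r + p * r := add_lt_add_of_lt_of_le hj.2 (mem_filter.mp hjt).2
      _ ≤ 2 * p * r := by linarith
  · refine (card_le_card fun j hj => ?_).trans_lt (hmax m hpm z)
    rw [mem_filter] at hj ⊢
    exact ⟨hj.1, (dist_comm z (w j) ▸ hj.2).le⟩

end Greedy

/-- **Cartan's lemma.** Given complex numbers `w₁, …, w_Q` and `Λ > 0`, the estimate
`∏ |z - wⱼ| ≥ Λ^Q` holds for all `z` outside a finite union of discs whose radii have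
sum at most `6Λ`. -/
theorem cartan_lemma (Q : ℕ) (hQ : 0 < Q) (w : Fin Q → ℂ) (Λ : ℝ) (hΛ : 0 < Λ) :
    ∃ (m : ℕ) (c : Fin m → ℂ) (ρ : Fin m → ℝ),
      (∀ i, 0 ≤ ρ i) ∧ (∑ i, ρ i) ≤ 6 * Λ ∧
      ∀ z : ℂ, z ∉ ⋃ i, Metric.ball (c i) (ρ i) →
        Λ ^ Q ≤ ∏ j, ‖z - w j‖ := by
  let r := 3 * Λ / Q
  have hr : 0 ≤ r := by positivity
  obtain ⟨k, c, p, hsum, hcount⟩ := exists_balls_card_dist_lt w hr univ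
  refine ⟨k, c, fun i => 2 * p i * r, fun i => by positivity, ?_, fun z hz => ?_⟩
  · have hsum' : ∑ i, (p i : ℝ) ≤ Q := by exact_mod_cast hsum.trans (by simp)
    calc ∑ i, 2 * (p i : ℝ) * r = 2 * (∑ i, (p i : ℝ)) * r := by rw [← sum_mul, ← mul_sum]
      _ ≤ 2 * Q * r := by gcongr
      _ = 6 * Λ := by rw [mul_assoc, mul_div_cancel₀ _ (Nat.cast_pos.mpr hQ).ne']; ring
  · calc Λ ^ Q ≤ Q ! * r ^ Q := pow_le_factorial_mul_div_pow hΛ.le Q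
      _ ≤ ∏ j, dist z (w j) := factorial_mul_pow_le_prod hr (by simpa using hcount z hz)
      _ = ∏ j, ‖z - w j‖ := by simp only [dist_eq_norm]
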